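/- Every right-closing cellular automaton on A^{Σ*} is preinjective. -/

import Mathlib

open Function

variable {Sig A : Type*}

/-- Configurations over the tree `Sig*`: maps from the free monoid (lists) to `A`. -/
abbrev Config (Sig A : Type*) := List Sig → A

/-- Shift action: `(shift f v) w = f (v ++ w)`. -/
def shift (f : Config Sig A) (v : List Sig) : Config Sig A := fun w => f (v ++ w)

/-- `Delta Sig n` is the set of words of length `< n` (i.e. `Δ_n`). -/
def Delta (Sig : Type*) (n : ℕ) : Type _ := {w : List Sig // w.length < n}

/-- Restriction of a configuration to `Δ_n`. -/
def restrict (f : Config Sig A) (n : ℕ) : Delta Sig n → A := fun w => f w.val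

/-- The CA defined by a local map `μ` of radius `r`. -/
def caMap (r : ℕ) (μ : (Delta Sig (r + 1) → A) → A) : Config Sig A → Config Sig A :=
  fun f v => μ (restrict (shift f v) (r + 1))

/-- `τ` is a cellular automaton: it admits a radius `r ≥ 1` and a local defining map. -/
def IsCA (τ : Config Sig A → Config Sig A) : Prop :=
  ∃ r : ℕ, 1 ≤ r ∧ ∃ μ : (Delta Sig (r + 1) → A) → A,
    ∀ (f : Config Sig A) (v : List Sig), τ f v = μ (restrict (shift f v) (r + 1))

/-- A subshift: a closed, shift-invariant set of configurations. -/
def IsSubshift [TopologicalSpace A] (X : Set (Config Sig A)) : Prop :=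
  IsClosed X ∧ ∀ f ∈ X, ∀ v : List Sig, shift f v ∈ X

/-- The blocks of size `n` of `X`. -/
def blockSet (X : Set (Config Sig A)) (n : ℕ) : Set (Delta Sig n → A) :=
  {p | ∃ f ∈ X, restrict f n = p}

/-- Positive expansiveness with constant `N`. -/
def PosExpansive (τ : Config Sig A → Config Sig A) (N : ℕ) : Prop :=
  1 ≤ N ∧ ∀ f₁ f₂ : Config Sig A, f₁ ≠ f₂ →
    ∃ t : ℕ, restrict (τ^[t] f₁) N ≠ restrict (τ^[t] f₂) N

/-- The set `P(τ, n, t)` of `t`-tuples of traces on `Δ_n`. -/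
def Pset (τ : Config Sig A → Config Sig A) (n t : ℕ) : Set (Fin t → Delta Sig n → A) :=
  {s | ∃ f : Config Sig A, ∀ i : Fin t, s i = restrict (τ^[(i : ℕ)] f) n}

/-- The block `a ◁ p` on `Δ_{r+1}` with root value `a` and agreeing with `p` elsewhere. -/
def rootIns (r : ℕ) (a : A) (p : {w : List Sig // w.length < r + 1 ∧ w ≠ []} → A) :
    Delta Sig (r + 1) → A :=
  fun w => if h : w.val.length = 0 then a else
    p ⟨w.val, ⟨w.2, fun he => h (by simp [he])⟩⟩

/-- Permutivity: for every pattern on `Δ_{r+1} \ {ε}`, the induced map on root values is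
a permutation of `A`. -/
def Permutive (r : ℕ) (μ : (Delta Sig (r + 1) → A) → A) : Prop :=
  ∀ p : {w : List Sig // w.length < r + 1 ∧ w ≠ []} → A,
    Function.Bijective (fun a : A => μ (rootIns r a p))

/-- The image under the local map `μ` of a block of size `n + r`: a block of size `n`. -/
def blockImage (r n : ℕ) (μ : (Delta Sig (r + 1) → A) → A)
    (p : Delta Sig (n + r) → A) : Delta Sig n → A :=
  fun v => μ (fun w => p ⟨v.val ++ w.val, by
    have hv := v.2; have hw := w.2
    simp only [List.length_append]; omega⟩)

/-- A diamond of `(r, μ)`: two distinct blocks of size `n = m + r > 2r + 2` coinciding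
with a block `p ∈ A^{Δ_r}` on `Δ_r` and on `vΔ_r` for every `v` of length `m = n - r`,
with the same image under `μ`. -/
def HasDiamond (r : ℕ) (μ : (Delta Sig (r + 1) → A) → A) : Prop :=
  ∃ (m : ℕ) (_ : r + 2 < m) (p : Delta Sig r → A)
    (p₁ p₂ : Delta Sig (m + r) → A),
    p₁ ≠ p₂ ∧
    (∀ w : Delta Sig r,
      p₁ ⟨w.val, by have := w.2; omega⟩ = p w ∧
      p₂ ⟨w.val, by have := w.2; omega⟩ = p w) ∧
    (∀ v : List Sig, ∀ hv : v.length = m, ∀ w : Delta Sig r,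
      p₁ ⟨v ++ w.val, by have := w.2; simp only [List.length_append]; omega⟩ = p w ∧
      p₂ ⟨v ++ w.val, by have := w.2; simp only [List.length_append]; omega⟩ = p w) ∧
    blockImage r m μ p₁ = blockImage r m μ p₂

/-- Right-closingness of the CA `caMap r μ`. -/
def RightClosing (r : ℕ) (μ : (Delta Sig (r + 1) → A) → A) : Prop :=
  ∃ N : ℕ, ∀ (p : Delta Sig r → A) (q : Delta Sig (r * N) → A),
    (∃ f : Config Sig A, restrict f r = p ∧ restrict (caMap r μ f) (r * N) = q) →
    ∃! ps : {v : List Sig // v.length = r} → Delta Sig r → A,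
      ∀ f : Config Sig A, restrict f r = p → restrict (caMap r μ f) (r * N) = q →
        ∀ (v : {v : List Sig // v.length = r}) (w : Delta Sig r),
          f (v.val ++ w.val) = ps v w

/-!
Extending the two blocks of a diamond by a common constant gives two distinct configurations
that agree on `Δ_r` and have the same image. Right-closingness forbids this: if two
configurations agree on `Δ_r` and have the same image, then they agree on every `xΔ_r` with
`|x| = r`, and applying this to their shifts by every word propagates the agreement from `Δ_n`
to `Δ_{n+1}`.
-/

lemma shift_shift (f : Config Sig A) (v w : List Sig) :
    shift (shift f v) w = shift f (v ++ w) := by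
  funext u
  simp [shift, List.append_assoc]

lemma caMap_shift (r : ℕ) (μ : (Delta Sig (r + 1) → A) → A) (f : Config Sig A) (v : List Sig) :
    caMap r μ (shift f v) = shift (caMap r μ f) v := by
  funext w
  simp only [caMap, shift_shift]
  rfl

lemma caMap_apply_eq_of_forall_le_length {r m : ℕ} {μ : (Delta Sig (r + 1) → A) → A}
    {f₁ f₂ : Config Sig A} (h : ∀ u : List Sig, m ≤ u.length → f₁ u = f₂ u) {u : List Sig}
    (hu : m ≤ u.length) : caMap r μ f₁ u = caMap r μ f₂ u := by
  refine congrArg μ (funext fun w => h _ ?_)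
  simp only [List.length_append]
  omega

namespace RightClosing

variable {r : ℕ} {μ : (Delta Sig (r + 1) → A) → A}

lemma apply_eq_of_length_eq (h : RightClosing r μ) (hr : 1 ≤ r) {f₁ f₂ : Config Sig A}
    (h₀ : restrict f₁ r = restrict f₂ r) (hτ : caMap r μ f₁ = caMap r μ f₂) {x : List Sig}
    (hx : x.length = r) : f₁ x = f₂ x := by
  obtain ⟨N, hN⟩ := h
  obtain ⟨ps, hps, -⟩ := hN _ _ ⟨f₁, rfl, rfl⟩
  have hnil : ([] : List Sig).length < r := hr
  have h₁ := hps f₁ rfl rfl ⟨x, hx⟩ ⟨[], hnil⟩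
  have h₂ := hps f₂ h₀.symm (by rw [hτ]) ⟨x, hx⟩ ⟨[], hnil⟩
  simpa using h₁.trans h₂.symm

lemma eq_of_restrict_eq_of_caMap_eq (h : RightClosing r μ) (hr : 1 ≤ r) {f₁ f₂ : Config Sig A}
    (h₀ : restrict f₁ r = restrict f₂ r) (hτ : caMap r μ f₁ = caMap r μ f₂) : f₁ = f₂ := by
  suffices hlt : ∀ n, ∀ u : List Sig, u.length < n → f₁ u = f₂ u from
    funext fun u => hlt _ u u.length.lt_succ_self
  intro n
  induction n with
  | zero => simp
  | succ n ih =>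
    intro u hu
    rcases Nat.lt_or_ge u.length r with hur | hur
    · exact congrFun h₀ ⟨u, hur⟩
    rcases Nat.lt_succ_iff_lt_or_eq.mp hu with hun | hun
    · exact ih u hun
    set v := u.take (u.length - r)
    have hv : v.length = u.length - r := by simp [v]
    have hshift : restrict (shift f₁ v) r = restrict (shift f₂ v) r := by
      funext w
      exact ih _ (by have := w.2; simp only [List.length_append]; omega)
    have hx : (u.drop (u.length - r)).length = r := by simp; omega
    have := h.apply_eq_of_length_eq hr hshift (by rw [caMap_shift, caMap_shift, hτ]) hx
    simpa [shift, v] using this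

end RightClosing

def extConfig (n : ℕ) (a : A) (p : Delta Sig n → A) : Config Sig A :=
  fun u => if h : u.length < n then p ⟨u, h⟩ else a

lemma extConfig_of_lt {n : ℕ} (a : A) (p : Delta Sig n → A) {u : List Sig} (hu : u.length < n) :
    extConfig n a p u = p ⟨u, hu⟩ :=
  dif_pos hu

lemma extConfig_of_le {n : ℕ} (a : A) (p : Delta Sig n → A) {u : List Sig} (hu : n ≤ u.length) :
    extConfig n a p u = a :=
  dif_neg (by omega)

lemma caMap_extConfig_of_lt {r m : ℕ} (μ : (Delta Sig (r + 1) → A) → A) (a : A)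
    (p : Delta Sig (m + r) → A) {u : List Sig} (hu : u.length < m) :
    caMap r μ (extConfig (m + r) a p) u = blockImage r m μ p ⟨u, hu⟩ :=
  congrArg μ (funext fun _ => extConfig_of_lt a p _)

lemma HasDiamond.exists_ne_restrict_eq_caMap_eq {r : ℕ} {μ : (Delta Sig (r + 1) → A) → A}
    (h : HasDiamond r μ) :
    ∃ f₁ f₂ : Config Sig A, f₁ ≠ f₂ ∧ restrict f₁ r = restrict f₂ r ∧
      caMap r μ f₁ = caMap r μ f₂ := by
  obtain ⟨m, hm, p, p₁, p₂, hne, hroot, hdeep, himg⟩ := h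
  let a := p₁ ⟨[], by simp; omega⟩
  refine ⟨extConfig (m + r) a p₁, extConfig (m + r) a p₂, ?_, ?_, ?_⟩
  · refine fun heq => hne (funext fun w => ?_)
    have := congrFun heq w.val
    rwa [extConfig_of_lt _ _ w.2, extConfig_of_lt _ _ w.2] at this
  · funext w
    have hw : w.val.length < m + r := by have := w.2; omega
    simpa [restrict, extConfig_of_lt _ _ hw] using (hroot w).1.trans (hroot w).2.symm
  have hfar : ∀ u : List Sig, m ≤ u.length →
      extConfig (m + r) a p₁ u = extConfig (m + r) a p₂ u := by
    intro u hu
    rcases Nat.lt_or_ge u.length (m + r) with hur | hur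
    · have hd := hdeep (u.take m) (by simp; omega) ⟨u.drop m, by simp; omega⟩
      simp only [List.take_append_drop] at hd
      simpa [extConfig_of_lt _ _ hur] using hd.1.trans hd.2.symm
    · simp [extConfig_of_le _ _ hur]
  funext u
  rcases Nat.lt_or_ge u.length m with hu | hu
  · rw [caMap_extConfig_of_lt _ _ _ hu, caMap_extConfig_of_lt _ _ _ hu, himg]
  · exact caMap_apply_eq_of_forall_le_length hfar hu

theorem rightClosing_preinjective_general
    (r : ℕ) (hr : 1 ≤ r) (μ : (Delta Sig (r + 1) → A) → A)
    (h : RightClosing r μ) :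
    ¬ HasDiamond r μ := fun hd => by
  obtain ⟨f₁, f₂, hne, h₀, hτ⟩ := hd.exists_ne_restrict_eq_caMap_eq
  exact hne (h.eq_of_restrict_eq_of_caMap_eq hr h₀ hτ)

/-- right-closing CA are preinjective. -/
theorem rightClosing_preinjective [Finite Sig] [Finite A] [Nonempty A]
    (r : ℕ) (hr : 1 ≤ r) (μ : (Delta Sig (r + 1) → A) → A)
    (h : RightClosing r μ) :
    ¬ HasDiamond r μ :=
  rightClosing_preinjective_general r hr μ h
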